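/- Let Y = {0,1}^ℕ with the ultrametric d(x,y) = e^{-k} for x ≠ y, where k = min{i : x_i ≠ y_i}, and d(x,x) = 0, and equip Y with the lexicographic total order on sequences. A bijection h : Y → Y is locally order preserving if for every x ∈ Y there exists ε > 0 such that h restricted to B(x,ε) is order preserving. Then the group of all bijections of Y that are both local similarities and locally order preserving acts locally rigidly on Y: if h : Y → Y is a locally order preserving local similarity, x ∈ Y, h x = x, and h restricts to an isometry of some open ball B(x,ε) onto B(x,ε), then there exists δ > 0 such that h y = y for all y ∈ B(x,δ). -/
import Mathlib


open Classical in
/-- The standard ultrametric on spaces of sequences: `d(x,y) = e^{-k}` where `k` is the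
first coordinate at which `x` and `y` differ, and `d(x,x) = 0`. -/
noncomputable def seqDist {α : Type*} (x y : ℕ → α) : ℝ :=
  if h : x = y then 0 else Real.exp (-(Nat.find (Function.ne_iff.mp h) : ℝ))

/-- The lexicographic (total) order on sequences of `0`s and `1`s. -/
def lexLE (x y : ℕ → Fin 2) : Prop :=
  x = y ∨ ∃ n : ℕ, (∀ i < n, x i = y i) ∧ x n < y n

/-- A local similarity of `Y = {0,1}^ℕ` with respect to the ultrametric `seqDist`:
a bijection `h` such that every point `x` has a ball `B(x,ε)` on which `h` restricts
to a `λ`-similarity onto `B(h x, λ·ε)` for some `λ > 0`. -/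
def IsLocalSimilaritySeq (h : (ℕ → Fin 2) → (ℕ → Fin 2)) : Prop :=
  Function.Bijective h ∧ ∀ x : ℕ → Fin 2, ∃ ε > 0, ∃ lam > 0,
    Set.BijOn h {y | seqDist x y < ε} {y | seqDist (h x) y < lam * ε} ∧
    ∀ a b : ℕ → Fin 2, seqDist x a < ε → seqDist x b < ε →
      seqDist (h a) (h b) = lam * seqDist a b

/-- A bijection `h` of `Y = {0,1}^ℕ` is locally order preserving if every point has a
ball on which `h` preserves the lexicographic order. -/
def LocallyOrderPreserving (h : (ℕ → Fin 2) → (ℕ → Fin 2)) : Prop :=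
  ∀ x : ℕ → Fin 2, ∃ ε > 0, ∀ a b : ℕ → Fin 2,
    seqDist x a < ε → seqDist x b < ε → lexLE a b → lexLE (h a) (h b)

open Classical

lemma seqDist_self {α : Type*} (x : ℕ → α) : seqDist x x = 0 := by
  simp [seqDist]

lemma seqDist_nonneg' {α : Type*} (x y : ℕ → α) : 0 ≤ seqDist x y := by
  unfold seqDist
  split
  · exact le_refl _
  · exact (Real.exp_pos _).le

lemma seqDist_eq_exp {α : Type*} {x y : ℕ → α} {n : ℕ}
    (h1 : ∀ i < n, x i = y i) (h2 : x n ≠ y n) :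
    seqDist x y = Real.exp (-(n : ℝ)) := by
  have hne : x ≠ y := fun e => h2 (congrFun e n)
  have hfind : Nat.find (Function.ne_iff.mp hne) = n := by
    rw [Nat.find_eq_iff]
    exact ⟨h2, fun m hm => not_not_intro (h1 m hm)⟩
  unfold seqDist
  rw [dif_neg hne, hfind]

lemma seqDist_comm {α : Type*} (x y : ℕ → α) : seqDist x y = seqDist y x := by
  by_cases hne : x = y
  · rw [hne]
  have hne' : y ≠ x := Ne.symm hne
  have : Nat.find (Function.ne_iff.mp hne) = Nat.find (Function.ne_iff.mp hne') := by
    apply le_antisymm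
    · exact Nat.find_le (Nat.find_spec (Function.ne_iff.mp hne')).symm
    · exact Nat.find_le (Nat.find_spec (Function.ne_iff.mp hne)).symm
  unfold seqDist
  rw [dif_neg hne, dif_neg hne', this]

lemma seqDist_agree_of_lt {α : Type*} {x y : ℕ → α} {j : ℕ}
    (h : seqDist x y < Real.exp (-(j : ℝ))) : x j = y j := by
  by_cases hne : x = y
  · rw [hne]
  unfold seqDist at h
  rw [dif_neg hne] at h
  have h1 : -(Nat.find (Function.ne_iff.mp hne) : ℝ) < -(j : ℝ) := Real.exp_lt_exp.mp h
  have h2 : (j : ℝ) < (Nat.find (Function.ne_iff.mp hne) : ℝ) := by linarith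
  have h3 : j < Nat.find (Function.ne_iff.mp hne) := by exact_mod_cast h2
  exact not_not.mp (Nat.find_min _ h3)

lemma seqDist_lt_trans {α : Type*} {x y z : ℕ → α} {c : ℝ}
    (h1 : seqDist x y < c) (h2 : seqDist y z < c) : seqDist x z < c := by
  have hc : 0 < c := lt_of_le_of_lt (seqDist_nonneg' x y) h1
  by_cases hxz : x = z
  · rw [hxz, seqDist_self]; exact hc
  by_cases hxy : x = y
  · subst hxy; exact h2
  by_cases hyz : y = z
  · subst hyz; exact h1
  unfold seqDist at h1 h2 ⊢
  rw [dif_neg hxy] at h1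
  rw [dif_neg hyz] at h2
  rw [dif_neg hxz]
  set A := Function.ne_iff.mp hxy
  set B := Function.ne_iff.mp hyz
  set C := Function.ne_iff.mp hxz
  have key : min (Nat.find A) (Nat.find B) ≤ Nat.find C := by
    rw [Nat.le_find_iff]
    intro m hm
    have ha : x m = y m := not_not.mp (Nat.find_min A (lt_of_lt_of_le hm (min_le_left _ _)))
    have hb : y m = z m := not_not.mp (Nat.find_min B (lt_of_lt_of_le hm (min_le_right _ _)))
    simp [ha, hb]
  rcases le_total (Nat.find A) (Nat.find B) with hab | hab
  · have hAC : Nat.find A ≤ Nat.find C := le_trans (by simp [min_eq_left hab]) key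
    calc Real.exp (-(Nat.find C : ℝ)) ≤ Real.exp (-(Nat.find A : ℝ)) := by
          apply Real.exp_le_exp.mpr
          have := (Nat.cast_le (α := ℝ)).mpr hAC
          linarith
      _ < c := h1
  · have hBC : Nat.find B ≤ Nat.find C := le_trans (by simp [min_eq_right hab]) key
    calc Real.exp (-(Nat.find C : ℝ)) ≤ Real.exp (-(Nat.find B : ℝ)) := by
          apply Real.exp_le_exp.mpr
          have := (Nat.cast_le (α := ℝ)).mpr hBC
          linarith
      _ < c := h2

lemma fin2_lt_cases : ∀ a b : Fin 2, a < b → a = 0 ∧ b = 1 := by decide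

lemma fin2_cases : ∀ a : Fin 2, a = 0 ∨ a = 1 := by decide

lemma fin2_add_one_ne : ∀ a : Fin 2, a + 1 ≠ a := by decide

/-- The group of locally order preserving local similarities of `Y = {0,1}^ℕ` acts
locally rigidly: if such an `h` fixes `x` and restricts to an isometry of some ball
`B(x,ε)` onto itself, then `h` is the identity on a ball around `x`. -/
theorem locally_order_preserving_local_similarities_act_locally_rigidly
    (h : (ℕ → Fin 2) → (ℕ → Fin 2))
    (hls : IsLocalSimilaritySeq h)
    (hlop : LocallyOrderPreserving h)
    (x : ℕ → Fin 2) (hx : h x = x)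
    (hiso : ∃ ε > 0,
      Set.BijOn h {y | seqDist x y < ε} {y | seqDist x y < ε} ∧
      ∀ a b : ℕ → Fin 2, seqDist x a < ε → seqDist x b < ε →
        seqDist (h a) (h b) = seqDist a b) :
    ∃ δ > 0, ∀ y : ℕ → Fin 2, seqDist x y < δ → h y = y := by
  obtain ⟨ε, hε, hbij, hisom⟩ := hiso
  obtain ⟨ε₂, hε₂, hord⟩ := hlop x
  refine ⟨min ε ε₂, lt_min hε hε₂, ?_⟩
  intro y hy
  have hyε : seqDist x y < ε := lt_of_lt_of_le hy (min_le_left _ _)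
  have hyε₂ : seqDist x y < ε₂ := lt_of_lt_of_le hy (min_le_right _ _)
  have hx0 : seqDist x x < ε := by rw [seqDist_self]; exact hε
  have dxhy : seqDist x (h y) = seqDist x y := by
    have := hisom x y hx0 hyε
    rwa [hx] at this
  funext j
  by_cases hj : Real.exp (-(j : ℝ)) < min ε ε₂
  · -- flip coordinate j
    set c : Fin 2 := y j + 1 with hc
    set y' := Function.update y j c with hy'def
    have hy'j : y' j = c := by simp [hy'def]
    have hy'i : ∀ i, i ≠ j → y' i = y i := by
      intro i hi; simp [hy'def, Function.update_apply, hi]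
    have hcne : c ≠ y j := fin2_add_one_ne (y j)
    have dyy' : seqDist y y' = Real.exp (-(j : ℝ)) := by
      apply seqDist_eq_exp
      · intro i hi; exact (hy'i i (Nat.ne_of_lt hi)).symm
      · rw [hy'j]; exact fun e => hcne e.symm
    have dxy' : seqDist x y' < min ε ε₂ := seqDist_lt_trans hy (by rw [dyy']; exact hj)
    have dxy'ε : seqDist x y' < ε := lt_of_lt_of_le dxy' (min_le_left _ _)
    have dxy'ε₂ : seqDist x y' < ε₂ := lt_of_lt_of_le dxy' (min_le_right _ _)
    have dhh : seqDist (h y) (h y') = Real.exp (-(j : ℝ)) := by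
      rw [hisom y y' hyε dxy'ε, dyy']
    have hne : h y ≠ h y' := by
      intro e
      rw [e, seqDist_self] at dhh
      exact absurd dhh.symm (Real.exp_pos _).ne'
    rcases fin2_cases (y j) with h0 | h1
    · have hcy : c = 1 := by rw [hc, h0]; rfl
      have hlex : lexLE y y' := by
        refine Or.inr ⟨j, fun i hi => (hy'i i (Nat.ne_of_lt hi)).symm, ?_⟩
        rw [h0, hy'j, hcy]
        decide
      obtain (heq | ⟨n, hn1, hn2⟩) := hord y y' hyε₂ dxy'ε₂ hlex
      · exact absurd heq hne
      have hdn : seqDist (h y) (h y') = Real.exp (-(n : ℝ)) :=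
        seqDist_eq_exp hn1 (ne_of_lt hn2)
      have hnj : n = j := by
        have := hdn.symm.trans dhh
        have := Real.exp_eq_exp.mp this
        exact_mod_cast neg_injective this
      subst hnj
      rw [(fin2_lt_cases _ _ hn2).1, h0]
    · have hcy : c = 0 := by rw [hc, h1]; rfl
      have hlex : lexLE y' y := by
        refine Or.inr ⟨j, fun i hi => hy'i i (Nat.ne_of_lt hi), ?_⟩
        rw [h1, hy'j, hcy]
        decide
      obtain (heq | ⟨n, hn1, hn2⟩) := hord y' y dxy'ε₂ hyε₂ hlex
      · exact absurd heq.symm hne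
      have hdn : seqDist (h y') (h y) = Real.exp (-(n : ℝ)) :=
        seqDist_eq_exp hn1 (ne_of_lt hn2)
      have hnj : n = j := by
        have h1' : Real.exp (-(n : ℝ)) = Real.exp (-(j : ℝ)) := by
          rw [← hdn, seqDist_comm, dhh]
        exact_mod_cast neg_injective (Real.exp_eq_exp.mp h1')
      subst hnj
      rw [(fin2_lt_cases _ _ hn2).2, h1]
  · have hjδ : min ε ε₂ ≤ Real.exp (-(j : ℝ)) := not_lt.mp hj
    have e1 : x j = y j := seqDist_agree_of_lt (lt_of_lt_of_le hy hjδ)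
    have e2 : x j = h y j := seqDist_agree_of_lt (by rw [dxhy]; exact lt_of_lt_of_le hy hjδ)
    rw [← e1, ← e2]
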